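/- arXiv:2407.08042 — 12 statements merged into one kernel-verified Lean document; each statement's English description precedes it below -/
import Mathlib

section
/- For every integer n ≥ 4, every permutation of n objects is a product of at most 4 derangements (permutations without fixed points). In particular, the symmetric group Sym(n) is generated by derangements. -/
/-!
By Hall's marriage theorem, on at least four points every permutation `σ` is avoided pointwise
by some derangement `d` (each point `x` has at least two admissible images outside `{x, σ x}`,
and each image is forbidden for at most two points). Then `σ * d⁻¹` is again a derangement, so
`σ = (σ * d⁻¹) * d` is a product of two derangements.
-/

open Equiv Finset

lemma mul_inv_mem_derangements {α : Type*} {σ d : Perm α} (hd : ∀ x, d x ≠ σ x) :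
    σ * d⁻¹ ∈ derangements α := fun x h =>
  hd (d⁻¹ x) (by simpa using h.symm)

variable {α : Type*} [Fintype α]

lemma card_le_card_biUnion_compl_pair [DecidableEq α] (h4 : 4 ≤ Fintype.card α) (σ : Perm α)
    (s : Finset α) : #s ≤ #(s.biUnion fun x => {x, σ x}ᶜ) := by
  rcases le_or_gt #s (Fintype.card α - 2) with hs | hs
  · obtain rfl | ⟨x, hx⟩ := s.eq_empty_or_nonempty
    · simp
    calc #s ≤ Fintype.card α - 2 := hs
      _ ≤ #({x, σ x}ᶜ) := by rw [card_compl]; have := card_le_two (a := x) (b := σ x); omega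
      _ ≤ _ := card_le_card (subset_biUnion_of_mem (fun y => {y, σ y}ᶜ) hx)
  · suffices s.biUnion (fun x => {x, σ x}ᶜ) = univ by rw [this]; exact card_le_univ s
    refine eq_univ_of_forall fun c => ?_
    -- `c` is a forbidden image only for `x = c` and `x = σ⁻¹ c`, and `s` has at least three points.
    obtain ⟨x, hxs, hxc⟩ := exists_mem_notMem_of_card_lt_card (s := {c, σ⁻¹ c}) (t := s)
      (by have := card_le_two (a := c) (b := σ⁻¹ c); omega)
    simp only [mem_insert, mem_singleton, not_or] at hxc
    simp only [mem_biUnion, mem_compl, mem_insert, mem_singleton, not_or]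
    exact ⟨x, hxs, Ne.symm hxc.1, fun h => hxc.2 (by simp [h])⟩

theorem exists_mem_derangements_forall_apply_ne (h4 : 4 ≤ Fintype.card α) (σ : Perm α) :
    ∃ d ∈ derangements α, ∀ x, d x ≠ σ x := by
  classical
  obtain ⟨f, hf, hft⟩ := (all_card_le_biUnion_card_iff_exists_injective _).1
    (card_le_card_biUnion_compl_pair h4 σ)
  have hft' : ∀ x, f x ≠ x ∧ f x ≠ σ x := fun x => by simpa [not_or] using hft x
  exact ⟨ofBijective f hf.bijective_of_finite, fun x => (hft' x).1, fun x => (hft' x).2⟩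

theorem exists_list_derangements_prod_eq (h4 : 4 ≤ Fintype.card α) (σ : Perm α) :
    ∃ l : List (Perm α), l.length = 2 ∧ (∀ τ ∈ l, τ ∈ derangements α) ∧ l.prod = σ := by
  obtain ⟨d, hd, hdσ⟩ := exists_mem_derangements_forall_apply_ne h4 σ
  refine ⟨[σ * d⁻¹, d], rfl, ?_, by simp⟩
  simpa using ⟨mul_inv_mem_derangements hdσ, hd⟩

theorem closure_derangements_eq_top (h4 : 4 ≤ Fintype.card α) :
    Subgroup.closure (derangements α) = ⊤ := by
  refine eq_top_iff.2 fun σ _ => ?_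
  obtain ⟨l, -, hl, rfl⟩ := exists_list_derangements_prod_eq h4 σ
  exact Subgroup.list_prod_mem _ fun τ hτ => Subgroup.subset_closure (hl τ hτ)

theorem derangements_generate (n : ℕ) (hn : 4 ≤ n) :
    (∀ σ : Equiv.Perm (Fin n), ∃ l : List (Equiv.Perm (Fin n)),
      l.length ≤ 4 ∧ (∀ τ ∈ l, ∀ x, τ x ≠ x) ∧ l.prod = σ) ∧
    Subgroup.closure {σ : Equiv.Perm (Fin n) | ∀ x, σ x ≠ x} = ⊤ := by
  have h4 : 4 ≤ Fintype.card (Fin n) := by simpa using hn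
  refine ⟨fun σ => ?_, closure_derangements_eq_top h4⟩
  obtain ⟨l, hlen, hl, hprod⟩ := exists_list_derangements_prod_eq h4 σ
  exact ⟨l, by omega, hl, hprod⟩
end

section
/- For every integer n ≥ 4, every transposition in Sym(n) is a product of two derangements. -/
/-!
View `Fin n` as the cyclic group `ℤ/n` and let `s` be translation by `k`. For `k ≠ 0`, both `s` and
`s⁻¹` are derangements, and `swap a b * s` fixes no point as long as `k` also avoids `a - b` and
`b - a`. When `n ≥ 4` such a `k` exists, and `swap a b = (swap a b * s) * s⁻¹`.
-/

open Equiv Finset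

theorem exists_ne_ne_ne_of_three_lt_card {α : Type*} [Fintype α] (h : 3 < Fintype.card α)
    (x y z : α) : ∃ k, k ≠ x ∧ k ≠ y ∧ k ≠ z := by
  classical
  have hcard : #({x, y, z} : Finset α) < #(univ : Finset α) :=
    card_le_three.trans_lt (by rwa [card_univ])
  obtain ⟨k, -, hk⟩ := exists_mem_notMem_of_card_lt_card hcard
  simp only [mem_insert, mem_singleton, not_or] at hk
  exact ⟨k, hk⟩

section

variable {G : Type*} [AddGroup G]

theorem addRight_mem_derangements {k : G} (hk : k ≠ 0) : Equiv.addRight k ∈ derangements G :=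
  fun x hx => hk (by simpa using hx)

theorem swap_mul_addRight_mem_derangements [DecidableEq G] {a b k : G} (hk : k ≠ 0)
    (hab : k ≠ -b + a) (hba : k ≠ -a + b) : swap a b * Equiv.addRight k ∈ derangements G := by
  intro x
  simp only [Perm.coe_mul, Function.comp_apply, coe_addRight]
  by_cases ha : x + k = a
  · rw [ha, swap_apply_left]
    rintro rfl
    exact hab (by rw [← ha, neg_add_cancel_left])
  by_cases hb : x + k = b
  · rw [hb, swap_apply_right]
    rintro rfl
    exact hba (by rw [← hb, neg_add_cancel_left])
  rw [swap_apply_of_ne_of_ne ha hb]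
  exact fun hx => hk (by simpa using hx)

end

theorem swap_eq_product_of_two_derangements (n : ℕ) (hn : 4 ≤ n)
    (τ : Equiv.Perm (Fin n)) (hτ : τ.IsSwap) :
    ∃ d₁ d₂ : Equiv.Perm (Fin n),
      (∀ x, d₁ x ≠ x) ∧ (∀ x, d₂ x ≠ x) ∧ τ = d₁ * d₂ := by
  obtain ⟨a, b, -, rfl⟩ := hτ
  have : NeZero n := ⟨by omega⟩
  obtain ⟨k, hk, hab, hba⟩ :=
    exists_ne_ne_ne_of_three_lt_card (by rwa [Fintype.card_fin]) 0 (-b + a) (-a + b)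
  refine ⟨swap a b * Equiv.addRight k, Equiv.addRight (-k),
    swap_mul_addRight_mem_derangements hk hab hba, addRight_mem_derangements (neg_ne_zero.2 hk), ?_⟩
  ext x
  simp
end

section
/- For every integer n ≥ 4, every even permutation in Sym(n) is a product of two n-cycles; in particular, every even permutation is a product of two derangements. -/
/-!
Fix an `n`-cycle `a` and write `σ = b * a`. Counting fixed points as orbits,
`sign b = (-1) ^ (n + #orbits of b)`, and `b` has the sign of an `n`-cycle because `σ` is
even; so `b` has an odd number of orbits. If it has only one, `b` is itself an `n`-cycle. Otherwise
pick `p, q, r` in three different orbits of `b`. Multiplying on the right by a transposition of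
two points in different orbits glues those orbits together, so `b * (p q) * (s r)` has two orbits
fewer for either choice `s ∈ {p, q}`. On the other side, `a⁻¹ * (p q)` splits the single orbit of
`a⁻¹` into an orbit of `p` and an orbit of `q`; taking for `s` the one of `p, q` whose orbit
misses `r`, `a⁻¹ * (p q) * (s r)` is again an `n`-cycle. With `u = (p q) * (s r)` we have
`σ = (b * u) * (u⁻¹ * a)`, and we conclude by induction on the number of orbits.
-/

open Finset

namespace Equiv.Perm

variable {α : Type*}

theorem SameCycle.induction_on [Finite α] {f : Perm α} {x y : α} {p : α → Prop}
    (h : f.SameCycle x y) (hx : p x) (hf : ∀ z, p z → p (f z)) : p y := by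
  obtain ⟨i, rfl⟩ := h.exists_nat_pow_eq
  clear h
  induction i with
  | zero => exact hx
  | succ i ih => rw [pow_succ', mul_apply]; exact hf _ ih

theorem sameCycle_iff_of_forall_sameCycle_apply_eq [Finite α] {f g : Perm α} {z w : α}
    (h : ∀ v, f.SameCycle z v → g v = f v) : g.SameCycle z w ↔ f.SameCycle z w := by
  constructor
  · refine fun hzw => hzw.induction_on SameCycle.rfl fun v hv => ?_
    rw [h v hv]
    exact sameCycle_apply_right.2 hv
  · refine fun hzw => (hzw.induction_on (p := fun v => f.SameCycle z v ∧ g.SameCycle z v)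
      ⟨SameCycle.rfl, SameCycle.rfl⟩ fun v ⟨hf, hg⟩ => ?_).2
    exact ⟨sameCycle_apply_right.2 hf, h v hf ▸ sameCycle_apply_right.2 hg⟩

theorem isCycleOn_univ_iff_sameCycle {f : Perm α} :
    f.IsCycleOn .univ ↔ ∀ x y, f.SameCycle x y :=
  ⟨fun h _ _ => h.2 trivial trivial,
    fun h => ⟨Set.bijOn_univ.2 (Equiv.bijective _), fun x _ y _ => h x y⟩⟩

variable [DecidableEq α] {f : Perm α} {x y z w : α}

theorem SameCycle.mul_swap_or [Finite α] (h : f.SameCycle x w) :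
    (f * swap x y).SameCycle x w ∨ (f * swap x y).SameCycle y w := by
  refine h.induction_on
    (p := fun v => (f * swap x y).SameCycle x v ∨ (f * swap x y).SameCycle y v)
    (Or.inl SameCycle.rfl) fun v hv => ?_
  have hfv : f v = (f * swap x y) (swap x y v) := by simp
  have hswap : (f * swap x y).SameCycle x (swap x y v) ∨
      (f * swap x y).SameCycle y (swap x y v) := by
    rw [swap_apply_def]; split_ifs <;> simp [hv, SameCycle.refl]
  rw [hfv]
  exact hswap.imp sameCycle_apply_right.2 sameCycle_apply_right.2

theorem sameCycle_mul_swap_of_not_sameCycle [Finite α] (hxy : ¬f.SameCycle x y)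
    (hw : f.SameCycle y w) : (f * swap x y).SameCycle x w := by
  have hcx : (f * swap x y) x = f y := by simp
  refine (sameCycle_apply_left.2 hw).induction_on
    (p := fun v => f.SameCycle y v → (f * swap x y).SameCycle x v)
    (fun _ => hcx ▸ sameCycle_apply_right.2 SameCycle.rfl) (fun v hv hfv => ?_) hw
  have hyv : f.SameCycle y v := sameCycle_apply_right.1 hfv
  have hvx : v ≠ x := by rintro rfl; exact hxy hyv.symm
  rcases eq_or_ne v y with rfl | hvy
  · exact hcx ▸ sameCycle_apply_right.2 SameCycle.rfl
  · have hcv : (f * swap x y) v = f v := by simp [swap_apply_of_ne_of_ne hvx hvy]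
    exact hcv ▸ sameCycle_apply_right.2 (hv hyv)

theorem sameCycle_mul_swap_iff_of_sameCycle [Finite α] (hxy : ¬f.SameCycle x y)
    (hz : f.SameCycle x z ∨ f.SameCycle y z) :
    (f * swap x y).SameCycle z w ↔ f.SameCycle x w ∨ f.SameCycle y w := by
  have hjoin : ∀ v, f.SameCycle x v ∨ f.SameCycle y v → (f * swap x y).SameCycle x v := by
    rintro v (hv | hv)
    · have hyv := sameCycle_mul_swap_of_not_sameCycle (fun h => hxy h.symm) hv
      rw [swap_comm] at hyv
      exact (sameCycle_mul_swap_of_not_sameCycle hxy SameCycle.rfl).trans hyv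
    · exact sameCycle_mul_swap_of_not_sameCycle hxy hv
  refine ⟨fun hzw => ?_, fun hw => (hjoin z hz).symm.trans (hjoin w hw)⟩
  refine ((hjoin z hz).trans hzw).induction_on
    (p := fun v => f.SameCycle x v ∨ f.SameCycle y v) (Or.inl SameCycle.rfl) fun v hv => ?_
  have hswap : f.SameCycle x (swap x y v) ∨ f.SameCycle y (swap x y v) := by
    rw [swap_apply_def]; split_ifs <;> simp [hv, SameCycle.refl]
  exact hswap.imp sameCycle_apply_right.2 sameCycle_apply_right.2

theorem sameCycle_mul_swap_iff_of_not_sameCycle [Finite α]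
    (hz : ¬(f.SameCycle x z ∨ f.SameCycle y z)) :
    (f * swap x y).SameCycle z w ↔ f.SameCycle z w := by
  refine sameCycle_iff_of_forall_sameCycle_apply_eq fun v hv => ?_
  have hvx : v ≠ x := by rintro rfl; exact hz (Or.inl hv.symm)
  have hvy : v ≠ y := by rintro rfl; exact hz (Or.inr hv.symm)
  simp [swap_apply_of_ne_of_ne hvx hvy]

theorem isCycleOn_univ_mul_swap [Finite α] (hxy : ¬f.SameCycle x y)
    (hcover : ∀ w, f.SameCycle x w ∨ f.SameCycle y w) : (f * swap x y).IsCycleOn .univ := by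
  have hx : ∀ w, (f * swap x y).SameCycle x w := fun w =>
    (sameCycle_mul_swap_iff_of_sameCycle hxy (Or.inl SameCycle.rfl)).2 (hcover w)
  exact isCycleOn_univ_iff_sameCycle.2 fun v w => (hx v).symm.trans (hx w)

variable [Fintype α]

def orbit (f : Perm α) (x : α) : Finset α := {y | f.SameCycle x y}

def orbits (f : Perm α) : Finset (Finset α) := univ.image f.orbit

@[simp]
theorem mem_orbit : y ∈ f.orbit x ↔ f.SameCycle x y := by simp [orbit]

theorem mem_orbits {s : Finset α} : s ∈ f.orbits ↔ ∃ x, f.orbit x = s := by simp [orbits]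

theorem orbit_eq_orbit_iff : f.orbit x = f.orbit y ↔ f.SameCycle x y := by
  refine ⟨fun h => mem_orbit.1 (h ▸ mem_orbit.2 SameCycle.rfl), fun h => ?_⟩
  ext w
  simp only [mem_orbit]
  exact ⟨h.symm.trans, h.trans⟩

theorem orbit_mul_swap (hxy : ¬f.SameCycle x y) (z : α) :
    (f * swap x y).orbit z =
      if f.SameCycle x z ∨ f.SameCycle y z then f.orbit x ∪ f.orbit y else f.orbit z := by
  ext w
  split_ifs with hz
  · simp [sameCycle_mul_swap_iff_of_sameCycle hxy hz]
  · simp [sameCycle_mul_swap_iff_of_not_sameCycle hz]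

theorem orbits_mul_swap (hxy : ¬f.SameCycle x y) :
    (f * swap x y).orbits =
      insert (f.orbit x ∪ f.orbit y) ((f.orbits.erase (f.orbit x)).erase (f.orbit y)) := by
  ext s
  simp only [mem_insert, mem_erase, mem_orbits, orbit_mul_swap hxy]
  constructor
  · rintro ⟨z, rfl⟩
    split_ifs with hz
    · exact Or.inl rfl
    · push Not at hz
      exact Or.inr ⟨fun h => hz.2 (orbit_eq_orbit_iff.1 h).symm,
        fun h => hz.1 (orbit_eq_orbit_iff.1 h).symm, z, rfl⟩
  · rintro (rfl | ⟨hy, hx, z, rfl⟩)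
    · exact ⟨x, by rw [if_pos (Or.inl SameCycle.rfl)]⟩
    · refine ⟨z, if_neg ?_⟩
      rintro (h | h)
      exacts [hx (orbit_eq_orbit_iff.2 h.symm), hy (orbit_eq_orbit_iff.2 h.symm)]

theorem card_orbits_mul_swap (hxy : ¬f.SameCycle x y) :
    #(f * swap x y).orbits + 1 = #f.orbits := by
  have hx : f.orbit x ∈ f.orbits := mem_orbits.2 ⟨x, rfl⟩
  have hy : f.orbit y ∈ f.orbits.erase (f.orbit x) :=
    mem_erase.2 ⟨fun h => hxy (orbit_eq_orbit_iff.1 h.symm), mem_orbits.2 ⟨y, rfl⟩⟩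
  have hnew : f.orbit x ∪ f.orbit y ∉ (f.orbits.erase (f.orbit x)).erase (f.orbit y) := by
    intro h
    obtain ⟨z, hz⟩ := mem_orbits.1 (mem_of_mem_erase (mem_of_mem_erase h))
    have hzx : f.SameCycle z x :=
      mem_orbit.1 (hz ▸ mem_union_left _ (mem_orbit.2 SameCycle.rfl))
    have hzy : f.SameCycle z y :=
      mem_orbit.1 (hz ▸ mem_union_right _ (mem_orbit.2 SameCycle.rfl))
    exact hxy (hzx.symm.trans hzy)
  rw [orbits_mul_swap hxy, card_insert_of_notMem hnew, card_erase_add_one hy,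
    card_erase_add_one hx]

theorem card_orbits_mul_swap_mul_swap {p q r s : α} (hpq : ¬f.SameCycle p q)
    (hpr : ¬f.SameCycle p r) (hqr : ¬f.SameCycle q r) (hs : s = p ∨ s = q) :
    #(f * swap p q * swap s r).orbits + 2 = #f.orbits := by
  have hsr : ¬(f * swap p q).SameCycle s r := by
    have hs' : f.SameCycle p s ∨ f.SameCycle q s := by
      rcases hs with rfl | rfl <;> simp [SameCycle.refl]
    rw [sameCycle_mul_swap_iff_of_sameCycle hpq hs']
    exact not_or.2 ⟨hpr, hqr⟩
  have h₁ := card_orbits_mul_swap hpq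
  have h₂ := card_orbits_mul_swap hsr
  omega

theorem isCycleOn_univ_of_card_orbits_eq_one (h : #f.orbits = 1) : f.IsCycleOn .univ := by
  obtain ⟨s, hs⟩ := card_eq_one.1 h
  have horbit : ∀ v, f.orbit v = s := fun v => mem_singleton.1 (hs ▸ mem_orbits.2 ⟨v, rfl⟩)
  exact isCycleOn_univ_iff_sameCycle.2 fun v w =>
    orbit_eq_orbit_iff.1 ((horbit v).trans (horbit w).symm)

theorem card_orbits_eq_one [Nonempty α] (h : f.IsCycleOn .univ) : #f.orbits = 1 := by
  obtain ⟨x⟩ := ‹Nonempty α›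
  have horbit : f.orbit = fun _ => f.orbit x :=
    funext fun v => orbit_eq_orbit_iff.2 (isCycleOn_univ_iff_sameCycle.1 h v x)
  rw [orbits, horbit, image_const univ_nonempty, card_singleton]

theorem orbit_eq_singleton (hx : f x = x) : f.orbit x = {x} := by
  ext y
  rw [mem_orbit, mem_singleton]
  exact ⟨fun h => (h.eq_of_left hx).symm, fun h => h ▸ SameCycle.rfl⟩

theorem orbit_eq_support_cycleOf (hx : f x ≠ x) : f.orbit x = (f.cycleOf x).support := by
  ext y
  rw [mem_orbit, mem_support_cycleOf_iff, and_iff_left (mem_support.2 hx)]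

theorem orbits_eq_union :
    f.orbits = (f.supportᶜ).image singleton ∪ f.cycleFactorsFinset.image support := by
  ext s
  simp only [mem_orbits, mem_union, mem_image, mem_compl, mem_support, not_not]
  constructor
  · rintro ⟨x, rfl⟩
    by_cases hx : f x = x
    · exact Or.inl ⟨x, hx, (orbit_eq_singleton hx).symm⟩
    · exact Or.inr ⟨f.cycleOf x, cycleOf_mem_cycleFactorsFinset_iff.2 (mem_support.2 hx),
        (orbit_eq_support_cycleOf hx).symm⟩
  · rintro (⟨x, hx, rfl⟩ | ⟨c, hc, rfl⟩)
    · exact ⟨x, orbit_eq_singleton hx⟩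
    · obtain ⟨x, hx⟩ := (mem_cycleFactorsFinset_iff.1 hc).1.nonempty_support
      rw [cycle_is_cycleOf hx hc]
      exact ⟨x, orbit_eq_support_cycleOf
        (mem_support.1 (mem_cycleFactorsFinset_support_le hc hx))⟩

theorem card_orbits (f : Perm α) :
    #f.orbits = Fintype.card α - #f.support + #f.cycleFactorsFinset := by
  have hdisj :
      ∀ s ∈ (f.supportᶜ).image singleton, s ∉ f.cycleFactorsFinset.image support := by
    intro s hs hs'
    obtain ⟨x, -, rfl⟩ := mem_image.1 hs
    obtain ⟨c, hc, hcx⟩ := mem_image.1 hs'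
    have := (mem_cycleFactorsFinset_iff.1 hc).1.two_le_card_support
    rw [hcx, card_singleton] at this
    omega
  have hinj : Set.InjOn support (f.cycleFactorsFinset : Set (Perm α)) := by
    intro c hc d hd hcd
    obtain ⟨x, hx⟩ := (mem_cycleFactorsFinset_iff.1 hc).1.nonempty_support
    rw [cycle_is_cycleOf hx hc, cycle_is_cycleOf (hcd ▸ hx) hd]
  rw [orbits_eq_union, card_union_of_disjoint (disjoint_left.2 hdisj),
    card_image_of_injective _ singleton_injective, card_image_of_injOn hinj, card_compl]

theorem sign_eq_neg_one_pow_card_orbits (f : Perm α) :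
    sign f = (-1) ^ (Fintype.card α + #f.orbits) := by
  have hcard : Multiset.card f.cycleType = #f.cycleFactorsFinset := by
    rw [cycleType_def, Multiset.card_map, card_val]
  obtain ⟨k, hk⟩ := Nat.exists_eq_add_of_le f.support.card_le_univ
  rw [sign_of_cycleType, sum_cycleType, hcard, card_orbits, hk, Nat.add_sub_cancel_left,
    show #f.support + k + (k + #f.cycleFactorsFinset) =
      #f.support + #f.cycleFactorsFinset + 2 * k by ring,
    pow_add _ _ (2 * k), pow_mul, neg_one_sq, one_pow, mul_one]

theorem odd_card_orbits_iff : Odd #f.orbits ↔ sign f = (-1) ^ (Fintype.card α + 1) := by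
  rw [sign_eq_neg_one_pow_card_orbits, pow_add, pow_add, mul_right_inj, pow_one,
    neg_one_pow_eq_neg_one_iff_odd (by decide)]

theorem sign_of_isCycleOn_univ [Nonempty α] (h : f.IsCycleOn .univ) :
    sign f = (-1) ^ (Fintype.card α + 1) :=
  odd_card_orbits_iff.1 (by rw [card_orbits_eq_one h]; exact odd_one)

theorem exists_isCycleOn_univ_mul_swap_mul_swap (hf : f.IsCycleOn .univ)
    {p q : α} (hpq : p ≠ q) (r : α) :
    ∃ s, (s = p ∨ s = q) ∧ (f * swap p q * swap s r).IsCycleOn .univ := by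
  have : Nonempty α := ⟨p⟩
  set c := f * swap p q
  have hcover : ∀ w, c.SameCycle p w ∨ c.SameCycle q w := fun w =>
    (isCycleOn_univ_iff_sameCycle.1 hf p w).mul_swap_or
  -- splitting a cycle by a transposition flips the sign, so it cannot leave a single cycle
  have hsplit : ¬c.SameCycle p q := by
    intro hpq'
    have hc : c.IsCycleOn .univ := isCycleOn_univ_iff_sameCycle.2 fun v w =>
      ((hcover v).elim id hpq'.trans).symm.trans ((hcover w).elim id hpq'.trans)
    have := sign_of_isCycleOn_univ hc
    rw [map_mul, sign_swap hpq, sign_of_isCycleOn_univ hf, mul_neg_one] at this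
    exact neg_units_ne_self _ this
  by_cases hpr' : c.SameCycle p r
  · refine ⟨q, Or.inr rfl, isCycleOn_univ_mul_swap (fun hqr' => hsplit (hpr'.trans hqr'.symm))
      fun w => (hcover w).symm.imp_right hpr'.symm.trans⟩
  · have hqr' : c.SameCycle q r := (hcover r).resolve_left hpr'
    exact ⟨p, Or.inl rfl, isCycleOn_univ_mul_swap hpr'
      fun w => (hcover w).imp_right hqr'.symm.trans⟩

theorem exists_isCycleOn_univ_mul_eq_mul {a b : Perm α} (ha : a.IsCycleOn .univ)
    (hb : Odd #b.orbits) :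
    ∃ c₁ c₂ : Perm α,
      c₁.IsCycleOn .univ ∧ c₂.IsCycleOn .univ ∧ b * a = c₁ * c₂ := by
  obtain ⟨k, hk⟩ := hb
  induction k generalizing a b with
  | zero => exact ⟨b, a, isCycleOn_univ_of_card_orbits_eq_one hk, ha, rfl⟩
  | succ k ih =>
    obtain ⟨_, hP, _, hQ, _, hR, hPQ, hPR, hQR⟩ := two_lt_card.1 (show 2 < #b.orbits by omega)
    obtain ⟨p, rfl⟩ := mem_orbits.1 hP
    obtain ⟨q, rfl⟩ := mem_orbits.1 hQ
    obtain ⟨r, rfl⟩ := mem_orbits.1 hR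
    rw [Ne, orbit_eq_orbit_iff] at hPQ hPR hQR
    obtain ⟨s, hs, ha'⟩ := exists_isCycleOn_univ_mul_swap_mul_swap ha.inv
      (show p ≠ q by rintro rfl; exact hPQ SameCycle.rfl) r
    have hb' := card_orbits_mul_swap_mul_swap hPQ hPR hQR hs
    obtain ⟨c₁, c₂, hc₁, hc₂, h⟩ := ih (a := (a⁻¹ * swap p q * swap s r)⁻¹)
      (b := b * swap p q * swap s r) ha'.inv (by omega)
    refine ⟨c₁, c₂, hc₁, hc₂, ?_⟩
    rw [← h]
    group

theorem isCycleOn_univ_iff_isCycle_and_support_eq_univ [Nontrivial α] :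
    f.IsCycleOn .univ ↔ f.IsCycle ∧ f.support = univ := by
  refine ⟨fun h => ⟨?_, ?_⟩, fun ⟨hc, hs⟩ => isCycleOn_univ_iff_sameCycle.2 fun x y =>
    hc.sameCycle (mem_support.1 (hs ▸ mem_univ x)) (mem_support.1 (hs ▸ mem_univ y))⟩
  · exact isCycle_iff_exists_isCycleOn.2 ⟨.univ, Set.nontrivial_univ, h, fun _ _ => trivial⟩
  · exact eq_univ_of_forall fun x => mem_support.2 (h.apply_ne Set.nontrivial_univ trivial)

end Equiv.Perm

open Equiv.Perm

theorem even_perm_product_two_cycles (n : ℕ) (hn : 4 ≤ n)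
    (σ : Equiv.Perm (Fin n)) (hσ : σ ∈ alternatingGroup (Fin n)) :
    (∃ c₁ c₂ : Equiv.Perm (Fin n),
      c₁.IsCycle ∧ c₁.support = Finset.univ ∧
      c₂.IsCycle ∧ c₂.support = Finset.univ ∧ σ = c₁ * c₂) ∧
    (∃ d₁ d₂ : Equiv.Perm (Fin n),
      (∀ x, d₁ x ≠ x) ∧ (∀ x, d₂ x ≠ x) ∧ σ = d₁ * d₂) := by
  have : Nontrivial (Fin n) := Fin.nontrivial_iff_two_le.2 (by omega)
  have ha : (finRotate n).IsCycleOn .univ :=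
    isCycleOn_univ_iff_isCycle_and_support_eq_univ.2
      ⟨isCycle_finRotate_of_le (by omega), support_finRotate_of_le (by omega)⟩
  have hb : Odd #(σ * (finRotate n)⁻¹).orbits := by
    rw [odd_card_orbits_iff, map_mul, sign_inv, mem_alternatingGroup.1 hσ, one_mul,
      sign_of_isCycleOn_univ ha]
  obtain ⟨c₁, c₂, hc₁, hc₂, h⟩ := exists_isCycleOn_univ_mul_eq_mul ha hb
  rw [inv_mul_cancel_right] at h
  obtain ⟨hc₁, hs₁⟩ := isCycleOn_univ_iff_isCycle_and_support_eq_univ.1 hc₁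
  obtain ⟨hc₂, hs₂⟩ := isCycleOn_univ_iff_isCycle_and_support_eq_univ.1 hc₂
  exact ⟨⟨c₁, c₂, hc₁, hs₁, hc₂, hs₂, h⟩,
    ⟨c₁, c₂, fun x => mem_support.1 (hs₁ ▸ mem_univ x),
      fun x => mem_support.1 (hs₂ ▸ mem_univ x), h⟩⟩
end

section
/- Suppose M ≤ N. If g : [N] → [M] is a constant function, then there is no f : [N] → [M] such that (f, g) is an edge of G(N, M). That is, every configuration in which all of the N people occupy the same room has in-degree zero when M ≤ N. -/
/-- Edge relation of the configuration graph `G(N, M)`: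
`(f, g)` is an edge iff for all `k`, `g k ≠ f k` iff `k` is the largest index in its `f`-fiber. -/
def RoomEdge (N M : ℕ) (f g : Fin N → Fin M) : Prop :=
  ∀ k : Fin N, g k ≠ f k ↔ ∀ j : Fin N, f j = f k → j ≤ k

/-- A directed path of length `n` from `f` to `g` in `G(N, M)`. -/
def RoomPath (N M : ℕ) (f g : Fin N → Fin M) (n : ℕ) : Prop :=
  ∃ p : ℕ → Fin N → Fin M, p 0 = f ∧ p n = g ∧ ∀ i < n, RoomEdge N M (p i) (p (i + 1))

/-- `V_s`: configurations injective on the `M` largest indices `(N−M, N]`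
(0-indexed: indices `k` with `N - M ≤ k`). -/
def RoomVs (N M : ℕ) (f : Fin N → Fin M) : Prop :=
  ∀ j k : Fin N, N - M ≤ (j : ℕ) → N - M ≤ (k : ℕ) → f j = f k → j = k

/-- `V_c`: configurations constant on the `M` largest indices `(N−M, N]`. -/
def RoomVc (N M : ℕ) (f : Fin N → Fin M) : Prop :=
  ∀ j k : Fin N, N - M ≤ (j : ℕ) → N - M ≤ (k : ℕ) → f j = f k

theorem constant_config_no_incoming_edge (N M : ℕ) (hN : 1 ≤ N) (hM : 2 ≤ M)
    (hMN : M ≤ N) (g : Fin N → Fin M) (hg : ∀ j k : Fin N, g j = g k) :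
    ¬ ∃ f : Fin N → Fin M, RoomEdge N M f g := by
  rintro ⟨f, hf⟩
  set c : Fin M := g ⟨0, hN⟩ with hc
  have hgc : ∀ k, g k = c := fun k => hg k ⟨0, hN⟩
  by_cases hex : ∃ k, f k = c
  · -- take the max of the fiber of c
    have hne : (Finset.univ.filter (fun k => f k = c)).Nonempty := by
      obtain ⟨k, hk⟩ := hex
      exact ⟨k, by simp [hk]⟩
    set k := (Finset.univ.filter (fun k => f k = c)).max' hne with hk
    have hkc : f k = c := by
      have := (Finset.univ.filter (fun k => f k = c)).max'_mem hne
      simpa using this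
    have hmax : ∀ j, f j = f k → j ≤ k := by
      intro j hj
      apply Finset.le_max'
      simp [hj, hkc]
    have := (hf k).2 hmax
    exact this (by rw [hgc k, hkc])
  · push_neg at hex
    have hinj : Function.Injective f := by
      have hall : ∀ k j, f j = f k → j ≤ k := by
        intro k
        by_contra h
        push_neg at h
        have : g k = f k := by
          by_contra hne
          obtain ⟨j, hj1, hj2⟩ := h
          exact absurd (((hf k).1 hne) j hj1) (not_le.2 hj2)
        exact hex k (this ▸ hgc k)
      intro a b hab
      exact le_antisymm (hall b a hab) (hall a b hab.symm)
    have hcard : Fintype.card (Fin N) = Fintype.card (Fin M) := by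
      simp only [Fintype.card_fin]
      exact le_antisymm (by simpa using Fintype.card_le_of_injective f hinj) hMN
    have hbij : Function.Bijective f :=
      (Fintype.bijective_iff_injective_and_card f).2 ⟨hinj, hcard⟩
    obtain ⟨k, hk⟩ := hbij.2 c
    exact hex k hk
end

section
/- Suppose M ≤ N and let g : [N] → [M] be a configuration whose restriction to the set (N−M, N] of the M largest indices is constant. Then there is no f : [N] → [M] such that (f, g) is an edge of G(N, M). -/
theorem Vc_no_incoming_edge (N M : ℕ) (hN : 1 ≤ N) (hM : 2 ≤ M) (hMN : M ≤ N)
    (g : Fin N → Fin M) (hg : RoomVc N M g) :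
    ¬ ∃ f : Fin N → Fin M, RoomEdge N M f g := by
  rintro ⟨f, hf⟩
  have hN1 : N - 1 < N := Nat.sub_lt hN one_pos
  set c : Fin M := g ⟨N - 1, hN1⟩ with hc
  have hgc : ∀ k : Fin N, N - M ≤ (k : ℕ) → g k = c := fun k hk =>
    hg k ⟨N - 1, hN1⟩ hk (by simp; omega)
  -- Every index in the range is the max of its fiber.
  have hmax : ∀ k : Fin N, N - M ≤ (k : ℕ) → ∀ j : Fin N, f j = f k → j ≤ k := by
    intro k hk
    set S : Finset (Fin N) := Finset.univ.filter (fun j => f j = f k) with hS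
    have hkS : k ∈ S := by simp [hS]
    have hSne : S.Nonempty := ⟨k, hkS⟩
    set m := S.max' hSne with hm
    have hmS : m ∈ S := S.max'_mem hSne
    have hfm : f m = f k := (Finset.mem_filter.mp hmS).2
    have hkm : k ≤ m := S.le_max' k hkS
    have hm_is_max : ∀ j : Fin N, f j = f m → j ≤ m := by
      intro j hj
      exact S.le_max' j (by simp [hS, hj.trans hfm])
    have hgm : g m ≠ f m := (hf m).mpr hm_is_max
    have hmrange : N - M ≤ (m : ℕ) := le_trans hk hkm
    rcases eq_or_lt_of_le hkm with h | h
    · intro j hj; exact h ▸ hm_is_max j (by rw [hfm]; exact hj)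
    · exfalso
      have hknotmax : ¬ ∀ j : Fin N, f j = f k → j ≤ k := by
        intro hall
        exact absurd (hall m hfm) (not_le.mpr h)
      have hgk : g k = f k := not_not.mp (fun hne => hknotmax ((hf k).mp hne))
      have : g m = f m := by
        rw [hgc m hmrange, hfm, ← hgk, hgc k hk]
      exact hgm this
  -- f restricted to the range is injective into Fin M, hence surjective.
  have hinj : Function.Injective (fun i : Fin M => f ⟨N - M + (i : ℕ), by omega⟩) := by
    intro i i' h
    simp only at h
    have h1 := hmax ⟨N - M + (i : ℕ), by omega⟩ (by simp) ⟨N - M + (i' : ℕ), by omega⟩ h.symm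
    have h2 := hmax ⟨N - M + (i' : ℕ), by omega⟩ (by simp) ⟨N - M + (i : ℕ), by omega⟩ h
    have : (i : ℕ) = (i' : ℕ) := by
      have h1' : N - M + (i' : ℕ) ≤ N - M + (i : ℕ) := h1
      have h2' : N - M + (i : ℕ) ≤ N - M + (i' : ℕ) := h2
      omega
    exact Fin.ext this
  obtain ⟨i, hi⟩ := (Finite.injective_iff_surjective.mp hinj) c
  set k : Fin N := ⟨N - M + (i : ℕ), by omega⟩ with hk
  have hgk : g k ≠ f k := (hf k).mpr (hmax k (by simp [hk]))
  exact hgk (by rw [hgc k (by simp [hk]), ← hi])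
end

section
/- Let g : [N] → [M] be a configuration whose restriction to (N−M, N] is not constant (where (N−M, N] means all of [N] if M ≥ N). Then there exists f : [N] → [M] whose restriction to (N−M, N] is injective such that (f, g) is an edge of G(N, M). In particular, every vertex outside V_c has positive in-degree. -/
lemma tail_card (N M : ℕ) : Fintype.card {k : Fin N // N - M ≤ (k:ℕ)} = N - (N - M) := by
  classical
  rw [Fintype.card_subtype]
  have h : (Finset.univ.filter fun k : Fin N => N - M ≤ (k:ℕ)).image Fin.val
      = Finset.Ico (N - M) N := by
    ext i
    simp only [Finset.mem_image, Finset.mem_filter, Finset.mem_univ, true_and, Finset.mem_Ico]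
    constructor
    · rintro ⟨k, hk, rfl⟩; exact ⟨hk, k.isLt⟩
    · rintro ⟨h1, h2⟩; exact ⟨⟨i, h2⟩, h1, rfl⟩
  have := Finset.card_image_of_injective
    (Finset.univ.filter fun k : Fin N => N - M ≤ (k:ℕ)) (Fin.val_injective)
  rw [h] at this
  rw [← this, Nat.card_Ico]

theorem not_Vc_positive_in_degree (N M : ℕ) (hN : 1 ≤ N) (hM : 2 ≤ M)
    (g : Fin N → Fin M) (hg : ¬ RoomVc N M g) :
    ∃ f : Fin N → Fin M, RoomVs N M f ∧ RoomEdge N M f g := by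
  classical
  unfold RoomVc at hg
  push_neg at hg
  obtain ⟨a, b, ha, hb, hab⟩ := hg
  set ι := {k : Fin N // N - M ≤ (k:ℕ)} with hι
  have hcardι : Fintype.card ι = N - (N - M) := tail_card N M
  have hcardι_le : Fintype.card ι ≤ M := by rw [hcardι]; omega
  let t : ι → Finset (Fin M) := fun k => ({g k.1} : Finset (Fin M))ᶜ
  have htcard : ∀ k : ι, (t k).card = M - 1 := by
    intro k
    simp [t, Finset.card_compl]
  have hall : ∀ s : Finset ι, s.card ≤ (s.biUnion t).card := by
    intro s
    have hs_le : s.card ≤ M := le_trans (Finset.card_le_univ s)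
      (Finset.card_univ.le.trans (le_of_eq rfl) |>.trans hcardι_le)
    by_cases hc : ∃ x ∈ s, ∃ y ∈ s, g x.1 ≠ g y.1
    · obtain ⟨x, hx, y, hy, hxy⟩ := hc
      have huniv : s.biUnion t = Finset.univ := by
        apply Finset.eq_univ_of_forall
        intro v
        rcases ne_or_eq v (g x.1) with h | h
        · exact Finset.mem_biUnion.2 ⟨x, hx, by simp [t, h]⟩
        · refine Finset.mem_biUnion.2 ⟨y, hy, ?_⟩
          simp only [t, Finset.mem_compl, Finset.mem_singleton]
          rw [h]; exact hxy
      rw [huniv, Finset.card_univ, Fintype.card_fin]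
      exact hs_le
    · push_neg at hc
      rcases s.eq_empty_or_nonempty with rfl | ⟨x, hx⟩
      · simp
      · have hsub : t x ⊆ s.biUnion t := Finset.subset_biUnion_of_mem t hx
        have hge : M - 1 ≤ (s.biUnion t).card := by
          rw [← htcard x]; exact Finset.card_le_card hsub
        have hlt : s.card < M := by
          by_contra hge'
          push_neg at hge'
          have hcs : s.card = Fintype.card ι := le_antisymm
            (Finset.card_le_univ s |>.trans Finset.card_univ.le)
            (by omega)
          have : s = Finset.univ := Finset.eq_univ_of_card s hcs
          subst this
          exact hab (hc ⟨a, ha⟩ (Finset.mem_univ _) ⟨b, hb⟩ (Finset.mem_univ _))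
        omega
  obtain ⟨f', hf'inj, hf'mem⟩ := (Finset.all_card_le_biUnion_card_iff_exists_injective t).1 hall
  have hf'ne : ∀ x : ι, f' x ≠ g x.1 := by
    intro x
    have := hf'mem x
    simpa [t] using this
  let f : Fin N → Fin M := fun k =>
    if h : N - M ≤ (k:ℕ) then f' ⟨k, h⟩ else g k
  refine ⟨f, ?_, ?_⟩
  · intro j k hj hk heq
    simp only [f, dif_pos hj, dif_pos hk] at heq
    have := hf'inj heq
    exact congrArg Subtype.val this
  · intro k
    by_cases hk : N - M ≤ (k:ℕ)
    · have hfk : f k = f' ⟨k, hk⟩ := dif_pos hk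
      apply iff_of_true
      · rw [hfk]; exact (hf'ne ⟨k, hk⟩).symm
      · intro j hj
        by_contra hjk
        push_neg at hjk
        have hj' : N - M ≤ (j:ℕ) := le_trans hk (le_of_lt hjk)
        have : f' ⟨j, hj'⟩ = f' ⟨k, hk⟩ := by
          rw [← hfk, ← hj]
          exact (show f j = f' ⟨j, hj'⟩ from dif_pos hj').symm
        have := congrArg Subtype.val (hf'inj this)
        simp at this
        omega
    · have hfk : f k = g k := dif_neg hk
      push_neg at hk
      have hMN : M < N := by omega
      have hcard : Fintype.card ι = Fintype.card (Fin M) := by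
        rw [hcardι, Fintype.card_fin]; omega
      have hsurj : Function.Surjective f' :=
        ((Fintype.bijective_iff_injective_and_card f').2 ⟨hf'inj, hcard⟩).2
      obtain ⟨x, hx⟩ := hsurj (g k)
      apply iff_of_false
      · rw [hfk]; simp
      · push_neg
        refine ⟨x.1, ?_, ?_⟩
        · rw [hfk, ← hx]
          show f x.1 = f' x
          rw [show f x.1 = f' ⟨x.1, x.2⟩ from dif_pos x.2]
        · have : N - M ≤ (x.1 : ℕ) := x.2
          rw [Fin.lt_def]
          omega
end

section
/- For every configuration f : [N] → [M], there exists a configuration g ∈ V_s (i.e., g restricted to the M largest indices (N−M, N] is injective) and a directed path in G(N, M) from f to g of length at most N. -/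
/-!
If `p` is injective on its `ℓ` largest indices, each of them is the last occurrence of its value.
Adding one common `d ≠ 0` to the values at all last occurrences is then an edge of `G(N, M)`
that keeps the top `ℓ` indices injective. Since `ℓ < M`, some value `w` is missed there, and
`d` can be chosen so that the next index `k₀ = N - ℓ - 1` joins them: `d = 1` if `k₀` is a last
occurrence (its value then differs from all values above it), and `d = p k₀ - w` otherwise
(`k₀` keeps its value `w + d`, which the shifted values above it no longer take).
After `min N M ≤ N` such steps the configuration lies in `V_s`.
-/

open Set Function

variable {N M : ℕ}

def IsLastOccurrence {α : Type*} (p : Fin N → α) (k : Fin N) : Prop :=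
  ∀ j, p j = p k → j ≤ k

open Classical in
noncomputable def shiftLastOccurrences (p : Fin N → Fin M) (d : Fin M) : Fin N → Fin M :=
  fun k => if IsLastOccurrence p k then p k + d else p k

theorem roomEdge_shiftLastOccurrences [NeZero M] (p : Fin N → Fin M) {d : Fin M} (hd : d ≠ 0) :
    RoomEdge N M p (shiftLastOccurrences p d) := by
  intro k
  by_cases hk : IsLastOccurrence p k
  · simp only [shiftLastOccurrences, if_pos hk, ne_eq, add_eq_left, hd, not_false_eq_true, true_iff]
    exact hk
  · simp only [shiftLastOccurrences, if_neg hk, ne_eq, not_true_eq_false, false_iff]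
    exact hk

theorem RoomPath.refl (f : Fin N → Fin M) : RoomPath N M f f 0 :=
  ⟨fun _ => f, rfl, rfl, fun _ hi => absurd hi (Nat.not_lt_zero _)⟩

theorem RoomPath.cons {f g h : Fin N → Fin M} {n : ℕ} (hfg : RoomEdge N M f g)
    (hgh : RoomPath N M g h n) : RoomPath N M f h (n + 1) := by
  obtain ⟨p, hp₀, hpn, hp⟩ := hgh
  refine ⟨fun | 0 => f | i + 1 => p i, rfl, hpn, ?_⟩
  rintro (_ | i) hi
  · simpa [hp₀] using hfg
  · exact hp i (by omega)

def topIndices (N ℓ : ℕ) : Set (Fin N) := {k | N - ℓ ≤ (k : ℕ)}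

theorem topIndices_zero (N : ℕ) : topIndices N 0 = ∅ := by
  ext k
  simp [topIndices]

theorem topIndices_min (N M : ℕ) : topIndices N (min N M) = topIndices N M := by
  ext k
  simp only [topIndices, mem_ofPred_eq]
  omega

theorem topIndices_succ {ℓ : ℕ} (hℓ : ℓ < N) :
    topIndices N (ℓ + 1) = insert ⟨N - ℓ - 1, by omega⟩ (topIndices N ℓ) := by
  ext k
  simp only [topIndices, mem_ofPred_eq, mem_insert_iff, Fin.ext_iff]
  omega

theorem exists_notMem_image_topIndices (p : Fin N → Fin M) {ℓ : ℕ} (hℓ : ℓ < M) :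
    ∃ w, w ∉ p '' topIndices N ℓ := by
  classical
  have hcard : Finset.card {k : Fin N | N - ℓ ≤ (k : ℕ)} ≤ ℓ := by
    have hlt := Fin.card_filter_val_lt (n := N) (m := N - ℓ)
    have hsplit := Finset.card_filter_add_card_filter_not (s := Finset.univ)
      (fun k : Fin N => (k : ℕ) < N - ℓ)
    simp only [not_lt, Finset.card_univ, Fintype.card_fin] at hsplit
    omega
  obtain ⟨w, -, hw⟩ := Finset.exists_mem_notMem_of_card_lt_card
    (s := Finset.image p {k : Fin N | N - ℓ ≤ (k : ℕ)}) (t := Finset.univ)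
    (by simpa using (Finset.card_image_le.trans hcard).trans_lt hℓ)
  exact ⟨w, fun hmem => hw (by simpa [topIndices] using hmem)⟩

theorem isLastOccurrence_of_injOn_topIndices {p : Fin N → Fin M} {ℓ : ℕ}
    (hp : InjOn p (topIndices N ℓ)) {k : Fin N} (hk : k ∈ topIndices N ℓ) :
    IsLastOccurrence p k := by
  intro j hj
  by_contra! hkj
  have hjtop : j ∈ topIndices N ℓ := le_trans hk (Fin.le_def.mp hkj.le)
  exact hkj.ne' (hp hjtop hk hj)

theorem shiftLastOccurrences_eqOn_topIndices {p : Fin N → Fin M} {ℓ : ℕ}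
    (hp : InjOn p (topIndices N ℓ)) (d : Fin M) :
    EqOn (shiftLastOccurrences p d) (fun k => p k + d) (topIndices N ℓ) := fun _ hk => by
  simp [shiftLastOccurrences, isLastOccurrence_of_injOn_topIndices hp hk]

theorem exists_ne_zero_shiftLastOccurrences_add_neg_notMem [NeZero M] (hM : 2 ≤ M) {ℓ : ℕ}
    (hℓM : ℓ < M) (p : Fin N → Fin M) {k₀ : Fin N} (hk₀ : (k₀ : ℕ) + 1 = N - ℓ) :
    ∃ d : Fin M, d ≠ 0 ∧ shiftLastOccurrences p d k₀ + -d ∉ p '' topIndices N ℓ := by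
  by_cases hlast : IsLastOccurrence p k₀
  · have hone : (1 : Fin M) ≠ 0 := by
      rw [Ne, Fin.ext_iff, Fin.val_one', Fin.val_zero, Nat.mod_eq_of_lt hM]; omega
    refine ⟨1, hone, ?_⟩
    rintro ⟨j, hj, hjk⟩
    simp only [shiftLastOccurrences, if_pos hlast, add_neg_cancel_right] at hjk
    have hjk₀ : j ≤ k₀ := hlast j hjk
    simp only [topIndices, mem_ofPred_eq, Fin.le_def] at hj hjk₀
    omega
  · obtain ⟨w, hw⟩ := exists_notMem_image_topIndices p hℓM
    have hk₀_mem : p k₀ ∈ p '' topIndices N ℓ := by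
      simp only [IsLastOccurrence, not_forall] at hlast
      obtain ⟨j, hj, hjk₀⟩ := hlast
      refine ⟨j, ?_, hj⟩
      simp only [topIndices, mem_ofPred_eq, Fin.le_def] at hjk₀ ⊢
      omega
    refine ⟨p k₀ - w, sub_ne_zero.2 (ne_of_mem_of_not_mem hk₀_mem hw), ?_⟩
    simpa [shiftLastOccurrences, hlast] using hw

theorem exists_roomEdge_injOn_topIndices_succ (hM : 2 ≤ M) {ℓ : ℕ} (hℓM : ℓ < M) (hℓN : ℓ < N)
    {p : Fin N → Fin M} (hp : InjOn p (topIndices N ℓ)) :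
    ∃ q, RoomEdge N M p q ∧ InjOn q (topIndices N (ℓ + 1)) := by
  have : NeZero M := ⟨by omega⟩
  set k₀ : Fin N := ⟨N - ℓ - 1, by omega⟩
  have hk₀ : k₀ ∉ topIndices N ℓ := by simp [k₀, topIndices]; omega
  obtain ⟨d, hd, hfresh⟩ :=
    exists_ne_zero_shiftLastOccurrences_add_neg_notMem hM hℓM p (k₀ := k₀) (by simp [k₀]; omega)
  refine ⟨shiftLastOccurrences p d, roomEdge_shiftLastOccurrences p hd, ?_⟩
  have heq := shiftLastOccurrences_eqOn_topIndices hp d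
  rw [topIndices_succ hℓN, injOn_insert hk₀, heq.image_eq, ← image_image (· + d),
    image_add_right]
  exact ⟨heq.injOn_iff.2 ((add_left_injective d).comp_injOn hp), hfresh⟩

theorem exists_roomPath_injOn_topIndices (hM : 2 ≤ M) (r : ℕ) {ℓ : ℕ} (hℓ : ℓ + r = min N M)
    {p : Fin N → Fin M} (hp : InjOn p (topIndices N ℓ)) :
    ∃ g, InjOn g (topIndices N M) ∧ RoomPath N M p g r := by
  induction r generalizing ℓ p with
  | zero => exact ⟨p, by rwa [← topIndices_min, ← hℓ], RoomPath.refl p⟩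
  | succ r ih =>
    obtain ⟨q, hpq, hq⟩ := exists_roomEdge_injOn_topIndices_succ hM (by omega) (by omega) hp
    obtain ⟨g, hg, hqg⟩ := ih (by omega) hq
    exact ⟨g, hg, RoomPath.cons hpq hqg⟩

theorem reach_Vs_in_at_most_N_steps_general (N M : ℕ) (hM : 2 ≤ M)
    (f : Fin N → Fin M) :
    ∃ g : Fin N → Fin M, RoomVs N M g ∧ ∃ n ≤ N, RoomPath N M f g n := by
  have hf : InjOn f (topIndices N 0) := topIndices_zero N ▸ injOn_empty f
  obtain ⟨g, hg, hfg⟩ := exists_roomPath_injOn_topIndices hM (min N M) (zero_add _) hf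
  exact ⟨g, fun j k hj hk => hg hj hk, min N M, min_le_left N M, hfg⟩

theorem reach_Vs_in_at_most_N_steps (N M : ℕ) (hN : 1 ≤ N) (hM : 2 ≤ M)
    (f : Fin N → Fin M) :
    ∃ g : Fin N → Fin M, RoomVs N M g ∧ ∃ n ≤ N, RoomPath N M f g n :=
  reach_Vs_in_at_most_N_steps_general N M hM f
end

section
/- Suppose N ≤ M and f : [N] → [M] is not injective. Then there exists g : [N] → [M] such that (f, g) is an edge of G(N, M) and the image of g is strictly larger than the image of f (i.e., g occupies strictly more rooms than f). -/
open Function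

theorem Finset.exists_perm_forall_ne_self_and_subset_image {α : Type*} [DecidableEq α]
    {s : Finset α} {r v₀ : α} (hr : r ∉ s) (hv₀ : v₀ ∈ s) :
    ∃ σ : Equiv.Perm α, (∀ v ∈ s, σ v ≠ v) ∧ (insert r s).erase v₀ ⊆ s.image σ := by
  set l := r :: v₀ :: (s.erase v₀).toList
  have hnodup : l.Nodup := by
    simp only [l, List.nodup_cons, List.mem_cons, Finset.mem_toList, Finset.mem_erase,
      Finset.nodup_toList, and_true]
    refine ⟨?_, by simp⟩
    rintro (rfl | ⟨-, h⟩) <;> contradiction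
  have hmem : ∀ v, v ∈ l ↔ v = r ∨ v ∈ s := by
    intro v
    simp only [l, List.mem_cons, Finset.mem_toList, Finset.mem_erase]
    constructor
    · rintro (h | rfl | ⟨-, h⟩) <;> simp_all
    · rintro (h | h)
      · exact .inl h
      · by_cases hv : v = v₀ <;> simp [hv, h]
  refine ⟨l.formPerm, fun v hv => ?_, fun v hv => ?_⟩
  · exact (List.formPerm_apply_mem_ne_self_iff _ hnodup v ((hmem v).2 (.inr hv))).2 (by simp [l])
  · obtain ⟨hvv₀, hv⟩ := Finset.mem_erase.1 hv
    obtain ⟨u, rfl⟩ := l.formPerm.surjective v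
    have hul : u ∈ l := by
      by_contra hu
      rw [List.formPerm_apply_of_notMem hu] at hv
      exact hu ((hmem u).2 (Finset.mem_insert.1 hv))
    have hur : u ≠ r := by
      rintro rfl
      exact hvv₀ (List.formPerm_apply_head _ _ _ hnodup)
    exact Finset.mem_image_of_mem _ (((hmem u).1 hul).resolve_left hur)

theorem exists_notMem_range_of_not_injective {α β : Type*} [Fintype α] [Fintype β]
    (hcard : Fintype.card α ≤ Fintype.card β) {f : α → β} (hf : ¬Injective f) :
    ∃ r, r ∉ Set.range f := by
  by_contra! hsurj
  have hf_surj : Surjective f := fun r => hsurj r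
  exact hf ((Fintype.bijective_iff_surjective_and_card f).2
    ⟨hf_surj, hcard.antisymm (Fintype.card_le_of_surjective f hf_surj)⟩).1

section FiberMax

variable {ι β : Type*} [LinearOrder ι] (f : ι → β)

def IsFiberMax (k : ι) : Prop :=
  ∀ j, f j = f k → j ≤ k

open Classical in
noncomputable def moveFiberMax (φ : β → β) (k : ι) : β :=
  if IsFiberMax f k then φ (f k) else f k

variable {f}

theorem exists_isFiberMax [Finite ι] (k : ι) : ∃ m, f m = f k ∧ IsFiberMax f m := by
  obtain ⟨m, hm, hmax⟩ := Set.Finite.exists_maximal (Set.toFinite {j | f j = f k}) ⟨k, rfl⟩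
  refine ⟨m, hm, fun j hj => ?_⟩
  by_contra! hlt
  exact hlt.not_ge (hmax (hj.trans hm) hlt.le)

theorem exists_not_isFiberMax_of_not_injective (hf : ¬Injective f) : ∃ a, ¬IsFiberMax f a := by
  obtain ⟨a, b, hab, hne⟩ : ∃ a b, f a = f b ∧ a ≠ b := by
    simpa [Injective] using hf
  rcases hne.lt_or_gt with h | h
  · exact ⟨a, fun hmax => (hmax b hab.symm).not_gt h⟩
  · exact ⟨b, fun hmax => (hmax a hab).not_gt h⟩

theorem apply_mem_range_moveFiberMax [Finite ι] (φ : β → β) (k : ι) :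
    φ (f k) ∈ Set.range (moveFiberMax f φ) := by
  obtain ⟨m, hm, hmax⟩ := exists_isFiberMax (f := f) k
  exact ⟨m, by rw [moveFiberMax, if_pos hmax, hm]⟩

theorem mem_range_moveFiberMax_of_not_isFiberMax (φ : β → β) {k : ι} (hk : ¬IsFiberMax f k) :
    f k ∈ Set.range (moveFiberMax f φ) :=
  ⟨k, if_neg hk⟩

end FiberMax

theorem roomEdge_moveFiberMax {N M : ℕ} {f : Fin N → Fin M} {φ : Fin M → Fin M}
    (hφ : ∀ k, φ (f k) ≠ f k) : RoomEdge N M f (moveFiberMax f φ) := by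
  intro k
  by_cases hk : IsFiberMax f k
  · simp only [moveFiberMax, if_pos hk]
    exact ⟨fun _ => hk, fun _ => hφ k⟩
  · simp only [moveFiberMax, if_neg hk, ne_eq, not_true_eq_false, false_iff]
    exact hk

theorem noninjective_step_increases_range_general (N M : ℕ)
    (hNM : N ≤ M) (f : Fin N → Fin M) (hf : ¬ Function.Injective f) :
    ∃ g : Fin N → Fin M, RoomEdge N M f g ∧ Set.range f ⊂ Set.range g := by
  classical
  obtain ⟨a, ha⟩ := exists_not_isFiberMax_of_not_injective hf
  obtain ⟨r, hr⟩ := exists_notMem_range_of_not_injective (by simpa using hNM) hf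
  obtain ⟨σ, hσ_ne, hσ_image⟩ := Finset.exists_perm_forall_ne_self_and_subset_image
    (s := Finset.univ.image f) (v₀ := f a) (by simpa using hr) (by simp)
  set g := moveFiberMax f σ
  have hcover : ∀ v, v = r ∨ v ∈ Set.range f → v ∈ Set.range g := by
    intro v hv
    by_cases hva : v = f a
    · exact hva ▸ mem_range_moveFiberMax_of_not_isFiberMax σ ha
    · obtain ⟨w, hw, rfl⟩ := Finset.mem_image.1 <| hσ_image <|
        Finset.mem_erase.2 ⟨hva, by simpa [eq_comm] using hv⟩
      obtain ⟨k, -, rfl⟩ := Finset.mem_image.1 hw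
      exact apply_mem_range_moveFiberMax σ k
  refine ⟨g, roomEdge_moveFiberMax fun k => hσ_ne _ (by simp), ?_⟩
  exact (Set.ssubset_iff_of_subset fun v hv => hcover v (.inr hv)).2
    ⟨r, hcover r (.inl rfl), hr⟩

theorem noninjective_step_increases_range (N M : ℕ) (hN : 1 ≤ N) (hM : 2 ≤ M)
    (hNM : N ≤ M) (f : Fin N → Fin M) (hf : ¬ Function.Injective f) :
    ∃ g : Fin N → Fin M, RoomEdge N M f g ∧ Set.range f ⊂ Set.range g :=
  noninjective_step_increases_range_general N M hNM f hf
end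

section
/- Let M ≠ 3 and let f, g ∈ V_s agree on [1, N−M]. Then there is a directed path in G(N, M) from f to g of length at most 4. -/
/-!
For `f ∈ V_s` the indices that are last in their `f`-fiber are exactly those of `(N−M, N]`, so
the edges out of `f` go to the configurations that agree with `f` on `[1, N−M]` and differ from
it everywhere on `(N−M, N]`. Hence `f → g` is an edge when `f` and `g` differ at every high index.
Otherwise, if `f ≠ g`, a high index where they differ and one where they agree carry three
distinct values, so `M ≥ 4`, and Hall's theorem gives an intermediate `h ∈ V_s` that differs from
both `f` and `g` at every high index, yielding the path `f → h → g`.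
-/

open Function Finset

/-- Each value is avoided by at most two of the pairs `{u i, v i}`, so three pairs avoid none. -/
lemma biUnion_compl_pair_eq_univ {ι α : Type*} [Fintype α] [DecidableEq α] {u v : ι → α}
    (hu : Injective u) (hv : Injective v) {s : Finset ι} (hs : 3 ≤ #s) :
    s.biUnion (fun i => {u i, v i}ᶜ) = univ := by
  classical
  refine eq_univ_of_forall fun a => ?_
  by_contra ha
  simp only [mem_biUnion, mem_compl, mem_insert, mem_singleton, not_exists, not_and,
    not_not] at ha
  have hcover : s ⊆ s.filter (u · = a) ∪ s.filter (v · = a) := fun i hi => by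
    rcases ha i hi with h | h <;> simp [hi, h]
  have hu₁ : #(s.filter (u · = a)) ≤ 1 :=
    card_le_one.mpr fun i hi j hj => hu ((mem_filter.mp hi).2.trans (mem_filter.mp hj).2.symm)
  have hv₁ : #(s.filter (v · = a)) ≤ 1 :=
    card_le_one.mpr fun i hi j hj => hv ((mem_filter.mp hi).2.trans (mem_filter.mp hj).2.symm)
  have := (card_le_card hcover).trans (card_union_le _ _)
  omega

lemma exists_injective_forall_ne_ne {ι α : Type*} [Fintype ι] [Fintype α] [DecidableEq α]
    (hα : 4 ≤ Fintype.card α) {u v : ι → α} (hu : Injective u) (hv : Injective v) :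
    ∃ e : ι → α, Injective e ∧ ∀ i, e i ≠ u i ∧ e i ≠ v i := by
  have hall : ∀ s : Finset ι, #s ≤ #(s.biUnion fun i => {u i, v i}ᶜ) := by
    intro s
    rcases le_or_gt #s (Fintype.card α - 2) with hs | hs
    · obtain rfl | ⟨i, hi⟩ := s.eq_empty_or_nonempty
      · simp
      have hpair : #({u i, v i} : Finset α) ≤ 2 := card_le_two
      calc #s ≤ Fintype.card α - 2 := hs
        _ ≤ #({u i, v i}ᶜ : Finset α) := by rw [card_compl]; omega
        _ ≤ _ := card_le_card (subset_biUnion_of_mem (fun i => ({u i, v i}ᶜ : Finset α)) hi)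
    · rw [biUnion_compl_pair_eq_univ hu hv (by omega), card_univ]
      exact (card_le_univ s).trans (Fintype.card_le_of_injective u hu)
  obtain ⟨e, he, hmem⟩ := (all_card_le_biUnion_card_iff_exists_injective _).mp hall
  refine ⟨e, he, fun i => ?_⟩
  simpa [not_or] using hmem i

namespace RoomVs

variable {N M : ℕ} {f : Fin N → Fin M}

lemma injective_restrict (hf : RoomVs N M f) :
    Injective fun k : {k : Fin N // N - M ≤ (k : ℕ)} => f k :=
  fun a b hab => Subtype.ext (hf a b a.2 b.2 hab)

/-- When `M < N`, `f` is a bijection from the high indices onto `Fin M`, so every low index has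
a high index above it in its fiber. -/
lemma isFiberMax_iff (hf : RoomVs N M f) (k : Fin N) :
    (∀ j : Fin N, f j = f k → j ≤ k) ↔ N - M ≤ (k : ℕ) := by
  refine ⟨fun hmax => ?_, fun hk j hjk => ?_⟩
  · by_contra hlow
    let F : Fin M → Fin M := fun i => f ⟨N - M + i, by omega⟩
    have hF : Injective F := fun a b hab => by
      have := Fin.val_eq_of_eq (hf _ _ (by simp) (by simp) hab)
      exact Fin.ext (by simpa using this)
    obtain ⟨i, hi⟩ := (Finite.injective_iff_surjective.mp hF) (f k)
    have := Fin.le_def.mp (hmax _ hi)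
    simp only at this
    omega
  · by_contra hjk'
    have := hf j k (by omega) hk hjk
    omega

lemma roomEdge {h : Fin N → Fin M} (hf : RoomVs N M f)
    (hlow : ∀ k : Fin N, (k : ℕ) < N - M → h k = f k)
    (hhigh : ∀ k : Fin N, N - M ≤ (k : ℕ) → h k ≠ f k) :
    RoomEdge N M f h := fun k => by
  rw [hf.isFiberMax_iff k]
  exact ⟨fun hne => not_lt.mp fun hk => hne (hlow k hk), hhigh k⟩

lemma three_le_of_eq_of_ne {g : Fin N → Fin M} (hf : RoomVs N M f) (hg : RoomVs N M g)
    {k₀ k₁ : Fin N} (hk₀ : N - M ≤ (k₀ : ℕ)) (hk₁ : N - M ≤ (k₁ : ℕ))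
    (hne : f k₀ ≠ g k₀) (heq : f k₁ = g k₁) : 3 ≤ M := by
  have hk : k₀ ≠ k₁ := fun h => hne (h ▸ heq)
  have hf₀₁ := Fin.val_injective.ne fun h => hk (hf k₀ k₁ hk₀ hk₁ h)
  have hg₀₁ := Fin.val_injective.ne fun h => hk (hg k₀ k₁ hk₀ hk₁ h)
  have hfg₀ := Fin.val_injective.ne hne
  have hfg₁ := congrArg Fin.val heq
  have := (f k₀).isLt
  have := (f k₁).isLt
  have := (g k₀).isLt
  omega

lemma exists_roomVs_ne_ne {g : Fin N → Fin M} (hf : RoomVs N M f) (hg : RoomVs N M g)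
    (hM : 4 ≤ M) :
    ∃ h : Fin N → Fin M, RoomVs N M h ∧ (∀ k : Fin N, (k : ℕ) < N - M → h k = f k) ∧
      ∀ k : Fin N, N - M ≤ (k : ℕ) → h k ≠ f k ∧ h k ≠ g k := by
  obtain ⟨e, he, hne⟩ := exists_injective_forall_ne_ne (by simpa using hM)
    hf.injective_restrict hg.injective_restrict
  refine ⟨fun k => if hk : N - M ≤ (k : ℕ) then e ⟨k, hk⟩ else f k, ?_, ?_, ?_⟩
  · intro j k hj hk hjk
    simp only [dif_pos hj, dif_pos hk] at hjk
    exact congrArg Subtype.val (he hjk)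
  · intro k hk
    simp [not_le.mpr hk]
  · intro k hk
    simpa [hk] using hne ⟨k, hk⟩

end RoomVs

namespace RoomPath

variable {N M : ℕ}

lemma refl_s10 (f : Fin N → Fin M) : RoomPath N M f f 0 :=
  ⟨fun _ => f, rfl, rfl, by simp⟩

lemma snoc {f g h : Fin N → Fin M} {n : ℕ} (hp : RoomPath N M f g n) (he : RoomEdge N M g h) :
    RoomPath N M f h (n + 1) := by
  obtain ⟨p, hp0, hpn, hedge⟩ := hp
  refine ⟨fun i => if i ≤ n then p i else h, by simpa using hp0, by simp, fun i hi => ?_⟩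
  rcases Nat.lt_or_eq_of_le (Nat.lt_succ_iff.mp hi) with hi | rfl
  · simpa [hi.le, Nat.succ_le_of_lt hi] using hedge i hi
  · simpa [hpn] using he

end RoomPath

theorem Vs_exchange_in_four_steps_general (N M : ℕ) (hM3 : M ≠ 3)
    (f g : Fin N → Fin M) (hf : RoomVs N M f) (hg : RoomVs N M g)
    (hagree : ∀ k : Fin N, (k : ℕ) < N - M → f k = g k) :
    ∃ n ≤ 4, RoomPath N M f g n := by
  by_cases hdisj : ∀ k : Fin N, N - M ≤ (k : ℕ) → f k ≠ g k
  · exact ⟨1, by omega, (RoomPath.refl_s10 f).snoc <|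
      hf.roomEdge (fun k hk => (hagree k hk).symm) fun k hk => (hdisj k hk).symm⟩
  by_cases hfg : f = g
  · exact ⟨0, by omega, hfg ▸ RoomPath.refl_s10 f⟩
  push Not at hdisj
  obtain ⟨k₁, hk₁, hfg₁⟩ := hdisj
  obtain ⟨k₀, hfg₀⟩ := Function.ne_iff.mp hfg
  have hk₀ : N - M ≤ (k₀ : ℕ) := not_lt.mp fun hk => hfg₀ (hagree k₀ hk)
  have hM : 4 ≤ M := by
    have := hf.three_le_of_eq_of_ne hg hk₀ hk₁ hfg₀ hfg₁
    omega
  obtain ⟨h, hh, hlow, hhigh⟩ := hf.exists_roomVs_ne_ne hg hM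
  have hfh : RoomEdge N M f h := hf.roomEdge hlow fun k hk => (hhigh k hk).1
  have hhg : RoomEdge N M h g :=
    hh.roomEdge (fun k hk => ((hlow k hk).trans (hagree k hk)).symm) fun k hk => (hhigh k hk).2.symm
  exact ⟨2, by omega, ((RoomPath.refl_s10 f).snoc hfh).snoc hhg⟩

theorem Vs_exchange_in_four_steps (N M : ℕ) (hN : 1 ≤ N) (hM : 2 ≤ M) (hM3 : M ≠ 3)
    (f g : Fin N → Fin M) (hf : RoomVs N M f) (hg : RoomVs N M g)
    (hagree : ∀ k : Fin N, (k : ℕ) < N - M → f k = g k) :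
    ∃ n ≤ 4, RoomPath N M f g n :=
  Vs_exchange_in_four_steps_general N M hM3 f g hf hg hagree
end

section
/- Let N ≥ 1 and M ≥ 2. Consider the directed graph G'(N, M) whose vertices are functions f : [N] → [M] and with an edge (f, g) whenever there exists exactly one k ∈ [N] with g(k) ≠ f(k), and this k satisfies k = max f⁻¹(f(k)). Then G'(N, M) is strongly connected. -/
/-- Edge relation of the asynchronous graph `G'(N, M)`: exactly one `k` moves,
and it is the largest index in its `f`-fiber. -/
def RoomEdge' (N M : ℕ) (f g : Fin N → Fin M) : Prop :=
  ∃ k : Fin N, g k ≠ f k ∧ (∀ j : Fin N, f j = f k → j ≤ k) ∧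
    ∀ j : Fin N, j ≠ k → g j = f j

/-- A directed path of length `n` in `G'(N, M)`. -/
def RoomPath' (N M : ℕ) (f g : Fin N → Fin M) (n : ℕ) : Prop :=
  ∃ p : ℕ → Fin N → Fin M, p 0 = f ∧ p n = g ∧ ∀ i < n, RoomEdge' N M (p i) (p (i + 1))

/-- The last person can always be moved (or left in place). -/
lemma lastMove {n M : ℕ} (f' : Fin n → Fin M) (x y : Fin M) :
    Relation.ReflTransGen (RoomEdge' (n + 1) M) (Fin.snoc f' x) (Fin.snoc f' y) := by
  rcases eq_or_ne x y with rfl | hxy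
  · exact Relation.ReflTransGen.refl
  · refine Relation.ReflTransGen.single ⟨Fin.last n, ?_, ?_, ?_⟩
    · simpa using hxy.symm
    · intro j _; exact Fin.le_last j
    · intro j hj
      induction j using Fin.lastCases with
      | last => exact absurd rfl hj
      | cast i => simp

/-- Lifting an edge in the `n`-person system to the `(n+1)`-person system,
provided the last person is parked in a room different from the mover's room. -/
lemma liftEdge {n M : ℕ} {f' g' : Fin n → Fin M} {k : Fin n} (z : Fin M)
    (hz : z ≠ f' k) (h1 : g' k ≠ f' k) (h2 : ∀ j : Fin n, f' j = f' k → j ≤ k)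
    (h3 : ∀ j : Fin n, j ≠ k → g' j = f' j) :
    RoomEdge' (n + 1) M (Fin.snoc f' z) (Fin.snoc g' z) := by
  refine ⟨k.castSucc, by simpa using h1, ?_, ?_⟩
  · intro j hj
    induction j using Fin.lastCases with
    | last =>
        simp only [Fin.snoc_last, Fin.snoc_castSucc] at hj
        exact absurd hj hz
    | cast i =>
        simp only [Fin.snoc_castSucc] at hj ⊢
        exact Fin.castSucc_le_castSucc_iff.mpr (h2 i hj)
  · intro j hj
    induction j using Fin.lastCases with
    | last => simp
    | cast i =>
        simp only [Fin.snoc_castSucc]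
        exact h3 i (fun h => hj (by rw [h]))

lemma liftPath {n M : ℕ} (hM : 2 ≤ M) {f' g' : Fin n → Fin M}
    (h : Relation.ReflTransGen (RoomEdge' n M) f' g') :
    ∀ x y : Fin M, Relation.ReflTransGen (RoomEdge' (n + 1) M)
      (Fin.snoc f' x) (Fin.snoc g' y) := by
  haveI : Nontrivial (Fin M) := Fin.nontrivial_iff_two_le.mpr hM
  induction h with
  | refl => intro x y; exact lastMove f' x y
  | @tail b c hb e ih =>
      intro x y
      obtain ⟨k, h1, h2, h3⟩ := e
      obtain ⟨z, hz⟩ := exists_ne (b k)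
      exact ((ih x z).trans
        (Relation.ReflTransGen.single (liftEdge z hz h1 h2 h3))).trans (lastMove c z y)

lemma connected_aux (M : ℕ) (hM : 2 ≤ M) :
    ∀ N : ℕ, ∀ f g : Fin N → Fin M, Relation.ReflTransGen (RoomEdge' N M) f g := by
  intro N
  induction N with
  | zero =>
      intro f g
      have : f = g := funext fun i => i.elim0
      rw [this]
  | succ n ih =>
      intro f g
      have h := liftPath hM (ih (Fin.init f) (Fin.init g)) (f (Fin.last n)) (g (Fin.last n))
      rwa [Fin.snoc_init_self, Fin.snoc_init_self] at h

theorem asynchronous_graph_strongly_connected (N M : ℕ) (hN : 1 ≤ N) (hM : 2 ≤ M) :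
    ∀ f g : Fin N → Fin M, Relation.ReflTransGen (RoomEdge' N M) f g :=
  connected_aux M hM N
end

section
/- If 2 = M < N, then from any configuration f : [N] → {1, 2}, after at most one step of the process the two smartest people N and N−1 occupy different rooms, and from then on every step consists exactly of persons N and N−1 swapping rooms while no one else moves. Consequently G(N, 2) is not strongly connected and decomposes into weakly connected components each containing exactly one directed cycle of length 2 among its non-source vertices. -/
/-!
Let `a` and `b` be the smartest and second smartest persons. Person `a` always moves. If `a` and
`b` share a room, `b` stays, so afterwards they are in different rooms. Once they are in different
rooms, with only two rooms every other person shares a room with `a` or `b` and stays, while `a`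
and `b`, each the smartest in their room, move to the other room: a step is exactly
`f ↦ f ∘ swap a b`, an involution. In particular every successor separates `a` and `b`, so a
configuration with everybody in one room has no predecessor, and `G(N, 2)` is not strongly
connected.
-/

theorem Fin.two_ne_iff_eq_of_ne {x y z : Fin 2} (hxy : x ≠ y) : z ≠ x ↔ z = y := by
  revert x y z; decide

theorem isTop_of_forall_lt_imp_eq {α : Type*} [LinearOrder α] {a b : α} (hba : b < a)
    (hb : ∀ j, b < j → j = a) : IsTop a := fun j =>
  (le_or_gt j b).elim (fun hjb => (hjb.trans_lt hba).le) fun hbj => (hb j hbj).le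

def IsSmartestInRoom {N M : ℕ} (f : Fin N → Fin M) (k : Fin N) : Prop :=
  ∀ j, f j = f k → j ≤ k

theorem roomEdge_iff {N M : ℕ} {f g : Fin N → Fin M} :
    RoomEdge N M f g ↔ ∀ k, (g k ≠ f k ↔ IsSmartestInRoom f k) :=
  Iff.rfl

namespace RoomEdge

variable {N M : ℕ} {f g : Fin N → Fin M} {a b : Fin N}

theorem apply_ne_of_isTop (h : RoomEdge N M f g) (ha : IsTop a) : g a ≠ f a :=
  (h a).2 fun j _ => ha j

theorem apply_eq_of_lt_of_eq (h : RoomEdge N M f g) (hba : b < a) (hf : f a = f b) :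
    g b = f b :=
  not_not.1 fun hne => ((h b).1 hne a hf).not_gt hba

end RoomEdge

section TwoRooms

variable {N : ℕ} {f g : Fin N → Fin 2} {a b : Fin N}

theorem isSmartestInRoom_two_iff (hba : b < a) (hb : ∀ j, b < j → j = a) (hf : f a ≠ f b)
    (k : Fin N) : IsSmartestInRoom f k ↔ k = a ∨ k = b := by
  constructor
  · intro hk
    by_contra! hkab
    have hkb : k < b := lt_of_le_of_ne (not_lt.1 fun hbk => hkab.1 (hb k hbk)) hkab.2
    rcases eq_or_ne (f k) (f a) with hfk | hfk
    · exact (hk a hfk.symm).not_gt (hkb.trans hba)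
    · exact (hk b ((Fin.two_ne_iff_eq_of_ne hf).1 hfk).symm).not_gt hkb
  · rintro (rfl | rfl)
    · exact fun j _ => isTop_of_forall_lt_imp_eq hba hb j
    · exact fun j hj => not_lt.1 fun hbj => hf (hb j hbj ▸ hj)

theorem roomEdge_two_iff_eq_comp_swap (hba : b < a) (hb : ∀ j, b < j → j = a)
    (hf : f a ≠ f b) : RoomEdge N 2 f g ↔ g = f ∘ Equiv.swap a b := by
  simp only [roomEdge_iff, isSmartestInRoom_two_iff hba hb hf, funext_iff, Function.comp_apply]
  refine forall_congr' fun k => ?_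
  rcases eq_or_ne k a with rfl | hka
  · simp [Fin.two_ne_iff_eq_of_ne hf]
  rcases eq_or_ne k b with rfl | hkb
  · simp [Fin.two_ne_iff_eq_of_ne hf.symm]
  · simp [Equiv.swap_apply_of_ne_of_ne hka hkb, hka, hkb]

theorem RoomEdge.apply_ne_of_two (h : RoomEdge N 2 f g) (hba : b < a)
    (hb : ∀ j, b < j → j = a) : g a ≠ g b := by
  by_cases hf : f a = f b
  · rw [h.apply_eq_of_lt_of_eq hba hf, ← hf]
    exact h.apply_ne_of_isTop (isTop_of_forall_lt_imp_eq hba hb)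
  · rw [(roomEdge_two_iff_eq_comp_swap hba hb hf).1 h]
    simpa using Ne.symm hf

theorem not_reflTransGen_roomEdge_two_const (hba : b < a) (hb : ∀ j, b < j → j = a)
    (c : Fin 2) (hf : f ≠ fun _ => c) : ¬ Relation.ReflTransGen (RoomEdge N 2) f fun _ => c := by
  intro hpath
  rcases hpath.cases_tail with rfl | ⟨e, -, he⟩
  · exact hf rfl
  · exact he.apply_ne_of_two hba hb rfl

end TwoRooms

theorem two_rooms_behaviour (N : ℕ) (hN : 2 < N) :
    (∀ f g : Fin N → Fin 2, RoomEdge N 2 f g →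
      g ⟨N - 1, by omega⟩ ≠ g ⟨N - 2, by omega⟩) ∧
    (∀ f : Fin N → Fin 2, f ⟨N - 1, by omega⟩ ≠ f ⟨N - 2, by omega⟩ →
      ∀ g : Fin N → Fin 2, RoomEdge N 2 f g →
        g ⟨N - 1, by omega⟩ = f ⟨N - 2, by omega⟩ ∧
        g ⟨N - 2, by omega⟩ = f ⟨N - 1, by omega⟩ ∧
        ∀ k : Fin N, (k : ℕ) < N - 2 → g k = f k) ∧
    (∀ f : Fin N → Fin 2, f ⟨N - 1, by omega⟩ ≠ f ⟨N - 2, by omega⟩ →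
      ∃ g : Fin N → Fin 2, RoomEdge N 2 f g ∧ RoomEdge N 2 g f) ∧
    ¬ (∀ f g : Fin N → Fin 2, Relation.ReflTransGen (RoomEdge N 2) f g) := by
  set a : Fin N := ⟨N - 1, by omega⟩
  set b : Fin N := ⟨N - 2, by omega⟩
  have hba : b < a := Fin.lt_def.2 (show N - 2 < N - 1 by omega)
  have hb (j : Fin N) (hj : b < j) : j = a :=
    Fin.ext (show (j : ℕ) = N - 1 by have : N - 2 < j := hj; omega)
  have hstep (f g : Fin N → Fin 2) (hf : f a ≠ f b) :=
    roomEdge_two_iff_eq_comp_swap (g := g) hba hb hf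
  refine ⟨fun f g h => h.apply_ne_of_two hba hb, fun f hf g h => ?_, fun f hf => ?_, fun hall => ?_⟩
  · rw [(hstep f g hf).1 h]
    refine ⟨by simp, by simp, fun k hk => ?_⟩
    have hka : k ≠ a := Fin.ne_of_val_ne (show (k : ℕ) ≠ N - 1 by omega)
    have hkb : k ≠ b := Fin.ne_of_val_ne (show (k : ℕ) ≠ N - 2 by omega)
    simp [Equiv.swap_apply_of_ne_of_ne hka hkb]
  · refine ⟨f ∘ Equiv.swap a b, (hstep _ _ hf).2 rfl, (hstep _ _ ?_).2 ?_⟩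
    · simpa using hf.symm
    · ext k; simp
  · exact not_reflTransGen_roomEdge_two_const hba hb 0 (fun h => by simpa using congrFun h a)
      (hall (fun _ => 1) fun _ => 0)
end

section
/- Let f : [N] → [M] be the constant configuration with all N people in one room. Then any directed path in G(N, M) from f to a configuration g in which no person occupies their original room has length at least N. -/
theorem escape_takes_N_steps (N M : ℕ) (hN : 1 ≤ N) (hM : 2 ≤ M)
    (f g : Fin N → Fin M) (hf : ∀ j k : Fin N, f j = f k)
    (hg : ∀ k : Fin N, g k ≠ f k) :
    ∀ n : ℕ, RoomPath N M f g n → N ≤ n := by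
  rintro n ⟨p, hp0, hpn, hstep⟩
  by_contra hlt
  push_neg at hlt
  -- invariant: for i ≤ n, if k + i < N then p i k = f k
  have inv : ∀ i ≤ n, ∀ k : Fin N, (k : ℕ) + i < N → p i k = f k := by
    intro i
    induction i with
    | zero => intro _ k _; rw [hp0]
    | succ i ih =>
      intro hin k hk
      have hi : i ≤ n := Nat.le_of_succ_le hin
      have hk' : (k : ℕ) + 1 < N := by omega
      set k' : Fin N := ⟨(k : ℕ) + 1, by omega⟩ with hk'def
      have hki : (k : ℕ) + i < N := by omega
      have h1 : p i k = f k := ih hi k hki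
      have h2 : p i k' = f k' := ih hi k' (by simpa using (by omega : (k : ℕ) + 1 + i < N))
      have hedge := hstep i (lt_of_lt_of_le (Nat.lt_succ_self i) hin)
      by_cases hchg : p (i + 1) k = p i k
      · rw [hchg, h1]
      · have hmax := (hedge k).mp hchg
        have : k' ≤ k := hmax k' (by rw [h2, h1, hf k' k])
        have : (k : ℕ) + 1 ≤ (k : ℕ) := this
        omega
  have h0 : ((⟨0, hN⟩ : Fin N) : ℕ) + n < N := by simpa using hlt
  have := inv n le_rfl ⟨0, hN⟩ h0
  rw [hpn] at this
  exact hg _ this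
end
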